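/- Let K act on a group A by automorphisms and let H ≤ K. Suppose (i) for every a ∈ A \ {e} there exists h ∈ H with α_h(a) ≠ a, and (ii) there exists a₀ ∈ A \ {e} with finite H-orbit. Then with G = A ⋊ K, one has N_G(H) = K (assuming additionally H ⊴ K), but the triple H ≤ K ≤ G fails condition (SS): there is a nonempty finite F ⊆ G \ K such that for all h ∈ H, FhF ∩ H ≠ ∅. -/

import Mathlib

/-!
Conjugating `inr h` by `g = inl a * inr k` gives an element whose `A`-component is
`a⁻¹ * φ h a` up to an automorphism, so if `g` normalizes `H` then `a` is fixed by all of `H`,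
hence trivial. Conversely `inl (φ h a₀)⁻¹ * inr h * inl a₀ = inr h`, so the finitely many
elements `inl b`, `inl b⁻¹` with `b` in the `H`-orbit of `a₀`, none of which lies in `K`, form
a set `F` with `F * inr h * F` meeting `H` for every `h ∈ H`.
-/

open SemidirectProduct

namespace SemidirectProduct

variable {A K : Type*} [Group A] [Group K] {φ : K →* MulAut A}

theorem mem_range_inr_iff {x : A ⋊[φ] K} : x ∈ (inr : K →* A ⋊[φ] K).range ↔ x.left = 1 := by
  constructor
  · rintro ⟨k, rfl⟩
    rfl
  · intro h
    exact ⟨x.right, by ext <;> simp [h]⟩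

theorem mem_map_inr_iff {H : Subgroup K} {x : A ⋊[φ] K} :
    x ∈ H.map (inr : K →* A ⋊[φ] K) ↔ x.left = 1 ∧ x.right ∈ H := by
  constructor
  · rintro ⟨k, hk, rfl⟩
    exact ⟨rfl, hk⟩
  · rintro ⟨h1, h2⟩
    exact ⟨x.right, h2, by ext <;> simp [h1]⟩

theorem inl_mem_range_inr_iff {a : A} : inl a ∈ (inr : K →* A ⋊[φ] K).range ↔ a = 1 :=
  mem_range_inr_iff

theorem inl_inv_mul_inr_mul_inl (k : K) (a : A) :
    (inl (φ k a)⁻¹ * inr k * inl a : A ⋊[φ] K) = inr k := by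
  ext <;> simp [mul_left, mul_right]

theorem left_inv_mul_inr_mul (g : A ⋊[φ] K) (k : K) :
    (g⁻¹ * inr k * g).left = φ g.right⁻¹ (g.left⁻¹ * φ k g.left) := by
  simp [mul_left, inv_left, mul_right, map_mul]

theorem range_inr_le_normalizer_map_inr {H : Subgroup K} (hH : H.Normal) :
    (inr : K →* A ⋊[φ] K).range ≤
      Subgroup.normalizer ((H.map inr : Subgroup (A ⋊[φ] K)) : Set (A ⋊[φ] K)) := by
  rw [MonoidHom.range_eq_map, ← Subgroup.normalizer_eq_top_iff.mpr hH]
  exact Subgroup.le_normalizer_map inr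

theorem apply_left_eq_of_mem_normalizer_map_inr {H : Subgroup K} {g : A ⋊[φ] K}
    (hg : g ∈ Subgroup.normalizer ((H.map inr : Subgroup (A ⋊[φ] K)) : Set (A ⋊[φ] K)))
    {h : K} (hh : h ∈ H) :
    φ h g.left = g.left := by
  have hconj : g⁻¹ * inr h * g ∈ H.map inr :=
    (Subgroup.mem_normalizer_iff''.mp hg (inr h)).mp ⟨h, hh, rfl⟩
  have hleft := (mem_map_inr_iff.mp hconj).1
  rw [left_inv_mul_inr_mul, map_eq_one_iff _ (MulEquiv.injective _), inv_mul_eq_one] at hleft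
  exact hleft.symm

theorem normalizer_map_inr_eq_range_inr {H : Subgroup K} (hH : H.Normal)
    (hfix : ∀ a : A, a ≠ 1 → ∃ h ∈ H, φ h a ≠ a) :
    Subgroup.normalizer ((H.map inr : Subgroup (A ⋊[φ] K)) : Set (A ⋊[φ] K)) =
      (inr : K →* A ⋊[φ] K).range := by
  refine le_antisymm (fun g hg => ?_) (range_inr_le_normalizer_map_inr hH)
  rw [mem_range_inr_iff]
  by_contra hne
  obtain ⟨h, hh, hmoved⟩ := hfix g.left hne
  exact hmoved (apply_left_eq_of_mem_normalizer_map_inr hg hh)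

theorem exists_finset_forall_mul_inr_mul_mem_map_inr {H : Subgroup K} {a₀ : A} (ha₀ : a₀ ≠ 1)
    (horb : {b : A | ∃ h ∈ H, b = φ h a₀}.Finite) :
    ∃ F : Finset (A ⋊[φ] K), F.Nonempty ∧
      (∀ f ∈ F, f ∉ (inr : K →* A ⋊[φ] K).range) ∧
      ∀ h ∈ H, ∃ f₁ ∈ F, ∃ f₂ ∈ F, f₁ * inr h * f₂ ∈ H.map (inr : K →* A ⋊[φ] K) := by
  set S := {b : A | ∃ h ∈ H, b = φ h a₀}
  have hS : ∀ b ∈ S, b ≠ 1 := by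
    rintro b ⟨h, -, rfl⟩
    exact (map_ne_one_iff _ (MulEquiv.injective _)).mpr ha₀
  have ha₀S : a₀ ∈ S := ⟨1, H.one_mem, by simp⟩
  have hfin : (inl '' S ∪ (inl '' S)⁻¹ : Set (A ⋊[φ] K)).Finite :=
    (horb.image _).union (horb.image _).inv
  refine ⟨hfin.toFinset, ⟨inl a₀, ?_⟩, fun f hf => ?_, fun h hh => ?_⟩
  · simp only [Set.Finite.mem_toFinset]
    exact Or.inl ⟨a₀, ha₀S, rfl⟩
  · rw [Set.Finite.mem_toFinset] at hf
    rcases hf with ⟨b, hb, rfl⟩ | ⟨b, hb, hfb⟩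
    · exact inl_mem_range_inr_iff.not.mpr (hS b hb)
    · rw [← Subgroup.inv_mem_iff, ← hfb]
      exact inl_mem_range_inr_iff.not.mpr (hS b hb)
  · refine ⟨inl (φ h a₀)⁻¹, ?_, inl a₀, ?_, ?_⟩
    · simp only [Set.Finite.mem_toFinset]
      exact Or.inr ⟨φ h a₀, ⟨h, hh, rfl⟩, by simp⟩
    · simp only [Set.Finite.mem_toFinset]
      exact Or.inl ⟨a₀, ha₀S, rfl⟩
    · rw [inl_inv_mul_inr_mul_inl]
      exact ⟨h, hh, rfl⟩

end SemidirectProduct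

/-- If no nonidentity element of `A` is fixed by all of `H`, but some `a₀ ≠ 1` has finite
`H`-orbit, then in `G = A ⋊[φ] K` one has `N_G(H) = K` while condition (SS) fails. -/
theorem stmt18 {A K : Type*} [Group A] [Group K] (φ : K →* MulAut A)
    (H : Subgroup K) (hH : H.Normal)
    (hfix : ∀ a : A, a ≠ 1 → ∃ h ∈ H, φ h a ≠ a)
    (a₀ : A) (ha₀ : a₀ ≠ 1) (horb : {b : A | ∃ h ∈ H, b = φ h a₀}.Finite) :
    Subgroup.normalizer ((H.map (SemidirectProduct.inr : K →* A ⋊[φ] K)) : Set (A ⋊[φ] K)) =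
        (SemidirectProduct.inr : K →* A ⋊[φ] K).range ∧
      ∃ F : Finset (A ⋊[φ] K), F.Nonempty ∧
        (∀ f ∈ F, f ∉ (SemidirectProduct.inr : K →* A ⋊[φ] K).range) ∧
        ∀ h ∈ H, ∃ f₁ ∈ F, ∃ f₂ ∈ F,
          f₁ * SemidirectProduct.inr h * f₂ ∈
            H.map (SemidirectProduct.inr : K →* A ⋊[φ] K) :=
  ⟨normalizer_map_inr_eq_range_inr hH hfix, exists_finset_forall_mul_inr_mul_mem_map_inr ha₀ horb⟩
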